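/- Let p : E → W be a surjective covering map between topological spaces, where E is path-connected and simply connected (a universal cover of W). Let L ⊆ W be a path-connected subspace (with the subspace topology) and x ∈ L a basepoint. If the homomorphism i_♯ : π₁(L, x) → π₁(W, x) induced by the inclusion L ↪ W is bijective, then the preimage p⁻¹(L) ⊆ E is path-connected and simply connected (so the restriction p : p⁻¹(L) → L is a universal cover of L). -/

import Mathlib

open CategoryTheory

/-- The homomorphism `f_♯ : π₁(X, x) → π₁(Y, f x)` induced on fundamental groups
by a continuous map `f : X → Y`. -/
noncomputable def inducedPi1Map {X Y : Type} [TopologicalSpace X] [TopologicalSpace Y]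
    (f : C(X, Y)) (x : X) :
    Aut (FundamentalGroupoid.mk x) →* Aut (FundamentalGroupoid.mk (f x)) :=
  Functor.mapAut (X := FundamentalGroupoid.mk x)
    ((FundamentalGroupoid.fundamentalGroupoidFunctor.map
      (show TopCat.of X ⟶ TopCat.of Y from TopCat.ofHom f)) :
      FundamentalGroupoid X ⥤ FundamentalGroupoid Y)

/-!
Let `q : p⁻¹(L) → L` be the restriction of `p`. As `L` is path-connected, bijectivity of `i_♯` at
one basepoint makes the inclusion `L ↪ W` bijective on homotopy classes of paths between any two
points of `L`. A path in `E` from `e₀` to `e` projects to a path in `W` homotopic to one in `L`;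
the lift of the latter through `q` starting at `e₀` ends at `e`, since lifts of homotopic paths
with a common start have a common end. Two paths in `p⁻¹(L)` with common ends become homotopic in
`W` because `E` is simply connected, hence in `L`, hence in `p⁻¹(L)` because a covering map is
injective on homotopy classes of paths.
-/

open Function unitInterval

namespace CategoryTheory.Functor

variable {C D : Type*} [Groupoid C]

theorem map_injective_of_injective_mapAut [Category D] (F : C ⥤ D) {x a b : C}
    (hF : Function.Injective (F.mapAut x)) (u : x ⟶ a) (v : x ⟶ b) :
    Function.Injective (F.map : (a ⟶ b) → (F.obj a ⟶ F.obj b)) := by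
  intro f g h
  have hconj : (Groupoid.isoEquivHom x x).symm (u ≫ f ≫ Groupoid.inv v) =
      (Groupoid.isoEquivHom x x).symm (u ≫ g ≫ Groupoid.inv v) :=
    hF (Iso.ext (by
      change F.map (u ≫ f ≫ Groupoid.inv v) = F.map (u ≫ g ≫ Groupoid.inv v)
      simp only [F.map_comp, h]))
  exact (cancel_mono _).1 ((cancel_epi u).1 (congrArg Iso.hom hconj))

theorem map_surjective_of_surjective_mapAut [Groupoid D] (F : C ⥤ D) {x a b : C}
    (hF : Function.Surjective (F.mapAut x)) (u : x ⟶ a) (v : x ⟶ b) :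
    Function.Surjective (F.map : (a ⟶ b) → (F.obj a ⟶ F.obj b)) := by
  intro φ
  obtain ⟨g, hg⟩ := hF ((Groupoid.isoEquivHom _ _).symm (F.map u ≫ φ ≫ Groupoid.inv (F.map v)))
  refine ⟨Groupoid.inv u ≫ g.hom ≫ v, ?_⟩
  have hg' : F.map g.hom = F.map u ≫ φ ≫ Groupoid.inv (F.map v) := congrArg Iso.hom hg
  simp [hg']

end CategoryTheory.Functor

open PathConnectedSpace (somePath)

section InducedPi1Map

variable {X Y : Type} [TopologicalSpace X] [TopologicalSpace Y] [PathConnectedSpace X]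
  {f : C(X, Y)} {x₀ : X}

theorem Path.Homotopic.of_map_of_injective_inducedPi1Map (hf : Injective (inducedPi1Map f x₀))
    {a b : X} {δ δ' : Path a b} (h : (δ.map f.continuous).Homotopic (δ'.map f.continuous)) :
    δ.Homotopic δ' := by
  rw [← Path.Homotopic.Quotient.eq] at h ⊢
  exact (FundamentalGroupoid.map f).map_injective_of_injective_mapAut hf
    (.mk (somePath x₀ a)) (.mk (somePath x₀ b)) h

theorem Path.exists_map_homotopic_of_surjective_inducedPi1Map
    (hf : Surjective (inducedPi1Map f x₀)) {a b : X} (γ : Path (f a) (f b)) :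
    ∃ δ : Path a b, (δ.map f.continuous).Homotopic γ := by
  obtain ⟨⟨δ⟩, hδ⟩ := (FundamentalGroupoid.map f).map_surjective_of_surjective_mapAut hf
    (.mk (somePath x₀ a) : FundamentalGroupoid.mk x₀ ⟶ FundamentalGroupoid.mk a)
    (.mk (somePath x₀ b)) (.mk γ)
  exact ⟨δ, Path.Homotopic.Quotient.eq.mp hδ⟩

end InducedPi1Map

namespace IsCoveringMap

section

variable {E W : Type*} [TopologicalSpace E] [TopologicalSpace W] {p : E → W}

theorem liftPath_apply_one_eq_of_homotopic (hp : IsCoveringMap p) {e e' : E} (β : Path e e')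
    {γ : Path (p e) (p e')} (hγ : γ.Homotopic (β.map hp.continuous)) {Γ : C(I, E)}
    (hΓ : p ∘ Γ = γ) (hΓ₀ : Γ 0 = e) : Γ 1 = e' := by
  have hΓ_eq : Γ = hp.liftPath γ e γ.source := (hp.eq_liftPath_iff' _).2 ⟨hΓ, hΓ₀⟩
  have hβ_eq : β.toContinuousMap = hp.liftPath (β.map hp.continuous) e (by simp) :=
    (hp.eq_liftPath_iff' _).2 ⟨rfl, β.source⟩
  calc Γ 1 = hp.liftPath γ e γ.source 1 := by rw [← hΓ_eq]
    _ = hp.liftPath (β.map hp.continuous) e (by simp) 1 :=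
      hp.liftPath_apply_one_eq_of_homotopicRel hγ e _ _
    _ = e' := by rw [← hβ_eq]; exact β.target

end

section

variable {E W : Type} [TopologicalSpace E] [TopologicalSpace W] {p : E → W} {L : Set W}
  [PathConnectedSpace L] {x : L}

theorem isPathConnected_preimage_of_surjective_inducedPi1Map [PathConnectedSpace E]
    (hp : IsCoveringMap p)
    (hL : Surjective (inducedPi1Map ⟨Subtype.val, continuous_subtype_val⟩ x))
    {e₀ : E} (he₀ : p e₀ ∈ L) : IsPathConnected (p ⁻¹' L) := by
  refine ⟨e₀, he₀, fun e he => ?_⟩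
  obtain ⟨δ, hδ⟩ := Path.exists_map_homotopic_of_surjective_inducedPi1Map hL
    (a := ⟨p e₀, he₀⟩) (b := ⟨p e, he⟩) ((somePath e₀ e).map hp.continuous)
  have hq := hp.restrictPreimage L
  set Γ := hq.liftPath δ ⟨e₀, he₀⟩ δ.source
  have hΓ₁ : (Γ 1 : E) = e := by
    refine hp.liftPath_apply_one_eq_of_homotopic (somePath e₀ e) hδ
      (Γ := (ContinuousMap.mk Subtype.val continuous_subtype_val).comp Γ) ?_ ?_
    · funext t
      exact congrArg Subtype.val (congrFun (hq.liftPath_lifts δ ⟨e₀, he₀⟩ δ.source) t)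
    · exact congrArg Subtype.val (hq.liftPath_zero ..)
  exact (joinedIn_iff_joined (F := p ⁻¹' L) he₀ he).2
    ⟨⟨Γ, hq.liftPath_zero .., Subtype.ext hΓ₁⟩⟩

theorem simplyConnectedSpace_preimage_of_injective_inducedPi1Map [SimplyConnectedSpace E]
    (hp : IsCoveringMap p)
    (hL : Injective (inducedPi1Map ⟨Subtype.val, continuous_subtype_val⟩ x))
    [PathConnectedSpace (p ⁻¹' L)] : SimplyConnectedSpace (p ⁻¹' L) := by
  have hq := hp.restrictPreimage L
  refine simply_connected_iff_paths_homotopic'.2 ⟨inferInstance, fun {a b} α α' => ?_⟩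
  have hW : ((α.map hq.continuous).map continuous_subtype_val).Homotopic
      ((α'.map hq.continuous).map continuous_subtype_val) :=
    (SimplyConnectedSpace.paths_homotopic (α.map continuous_subtype_val)
      (α'.map continuous_subtype_val)).map ⟨p, hp.continuous⟩
  have hL' := Path.Homotopic.of_map_of_injective_inducedPi1Map hL hW
  rw [← Path.Homotopic.Quotient.eq] at hL' ⊢
  exact hq.injective_path_homotopic_map a b (by simpa [← Path.Homotopic.Quotient.mk_map] using hL')

end

end IsCoveringMap

theorem preimage_universal_of_pi1_bijective_general
    {E W : Type} [TopologicalSpace E] [TopologicalSpace W]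
    (p : E → W) (hp : IsCoveringMap p) (hsurj : Function.Surjective p)
    [SimplyConnectedSpace E]
    (L : Set W) (hLpc : IsPathConnected L) (x : W) (hx : x ∈ L)
    (hbij : Function.Bijective
      (inducedPi1Map (ContinuousMap.mk (Subtype.val : L → W) continuous_subtype_val)
        (⟨x, hx⟩ : L))) :
    IsPathConnected (p ⁻¹' L) ∧ SimplyConnectedSpace (p ⁻¹' L) := by
  obtain ⟨e₀, rfl⟩ := hsurj x
  have := isPathConnected_iff_pathConnectedSpace.1 hLpc
  have hpc := hp.isPathConnected_preimage_of_surjective_inducedPi1Map hbij.2 hx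
  have := isPathConnected_iff_pathConnectedSpace.1 hpc
  exact ⟨hpc, hp.simplyConnectedSpace_preimage_of_injective_inducedPi1Map hbij.1⟩

/-- If `p : E → W` is a surjective covering map with `E` a universal cover (path-connected
and simply connected), `L ⊆ W` is a path-connected subspace with basepoint `x ∈ L`, and the
inclusion-induced map `π₁(L, x) → π₁(W, x)` is bijective, then `p ⁻¹' L` is path-connected
and simply connected. -/
theorem preimage_universal_of_pi1_bijective
    {E W : Type} [TopologicalSpace E] [TopologicalSpace W]
    (p : E → W) (hp : IsCoveringMap p) (hsurj : Function.Surjective p)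
    [PathConnectedSpace E] [SimplyConnectedSpace E]
    (L : Set W) (hLpc : IsPathConnected L) (x : W) (hx : x ∈ L)
    (hbij : Function.Bijective
      (inducedPi1Map (ContinuousMap.mk (Subtype.val : L → W) continuous_subtype_val)
        (⟨x, hx⟩ : L))) :
    IsPathConnected (p ⁻¹' L) ∧ SimplyConnectedSpace (p ⁻¹' L) :=
  preimage_universal_of_pi1_bijective_general p hp hsurj L hLpc x hx hbij
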